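/- arXiv:1911.04912 — 2 statements merged into one kernel-verified Lean document; each statement's English description precedes it below -/
import Mathlib

section
/- Let r ≤ n, let V_A, V_B be n×r complex matrices that are isometries (V_A^* V_A = I_r and V_B^* V_B = I_r), let Δ be an r×r diagonal matrix with strictly positive diagonal entries, and set Σ = Δ^{-1/2}, P_A = V_A V_A^*, and for a unitary W let F_W = V_B W Σ V_A^*. Let W_0 be a unitary matrix giving a polar decomposition V_B^* V_A Σ = W_0 · ((V_B^* V_A Σ)^* (V_B^* V_A Σ))^{1/2}. Then for every r×r unitary matrix W, ‖F_{W_0} − P_A‖_2 ≤ ‖F_W − P_A‖_2, where ‖X‖_2 = (Tr(X^* X))^{1/2} is the Hilbert–Schmidt norm. -/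
open Matrix
open scoped ComplexOrder

/-- The square root of a positive semidefinite matrix, as defined in the older Mathlib
(`Matrix.PosSemidef.sqrt`, since removed). -/
noncomputable def Matrix.PosSemidef.sqrt {n 𝕜 : Type*} [Fintype n] [RCLike 𝕜] [DecidableEq n]
    {A : Matrix n n 𝕜} (hA : A.PosSemidef) : Matrix n n 𝕜 :=
  hA.1.eigenvectorUnitary.1 * diagonal ((↑) ∘ (√·) ∘ hA.1.eigenvalues) *
    (star hA.1.eigenvectorUnitary : Matrix n n 𝕜)

lemma psd_trace_re_nonneg {r : ℕ} {M : Matrix (Fin r) (Fin r) ℂ} (hM : M.PosSemidef) :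
    0 ≤ (M.trace).re := by
  have h : (0:ℂ) ≤ M.trace := by
    rw [Matrix.trace]
    apply Finset.sum_nonneg
    intro i _
    exact hM.diag_nonneg
  exact (Complex.le_def.mp h).1

lemma re_trace_unitary_psd_le {r : ℕ} (U P : Matrix (Fin r) (Fin r) ℂ)
    (hU : Uᴴ * U = 1) (hP : P.PosSemidef) :
    ((U * P).trace).re ≤ (P.trace).re := by
  have h0 := psd_trace_re_nonneg (hP.mul_mul_conjTranspose_same (1 - U))
  have e1 : (1 - U) * P * (1 - U)ᴴ = P - P * Uᴴ - (U * P - U * P * Uᴴ) := by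
    rw [conjTranspose_sub, conjTranspose_one]
    noncomm_ring
  have e2 : (U * P * Uᴴ).trace = P.trace := by
    rw [Matrix.trace_mul_cycle, hU, Matrix.one_mul]
  have e3 : ((P * Uᴴ).trace).re = ((U * P).trace).re := by
    have h4 : P * Uᴴ = (U * P)ᴴ := by
      rw [conjTranspose_mul, hP.isHermitian.eq]
    rw [h4, Matrix.trace_conjTranspose]
    simp
  rw [e1, trace_sub, trace_sub, trace_sub] at h0
  simp only [Complex.sub_re] at h0
  rw [e2] at h0
  linarith [h0, e3]

/-- Let `r ≤ n`, let `V_A, V_B` be `n×r` isometries, let `Δ` be an `r×r` diagonal matrix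
with strictly positive diagonal entries `d`, set `Σ = Δ^{-1/2}`, `P_A = V_A V_A^*`, and for
a unitary `W` let `F_W = V_B W Σ V_A^*`.  Let `W₀` be a unitary giving a polar
decomposition `V_B^* V_A Σ = W₀ ((V_B^* V_A Σ)^* (V_B^* V_A Σ))^{1/2}`.  Then for every
unitary `W`, `‖F_{W₀} - P_A‖₂ ≤ ‖F_W - P_A‖₂` in the Hilbert–Schmidt norm. -/
theorem polar_unitary_minimizes {n r : ℕ} (hrn : r ≤ n)
    (VA VB : Matrix (Fin n) (Fin r) ℂ)
    (hVA : VAᴴ * VA = 1) (hVB : VBᴴ * VB = 1)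
    (d : Fin r → ℝ) (hd : ∀ i, 0 < d i)
    (Sig : Matrix (Fin r) (Fin r) ℂ)
    (hSig : Sig = Matrix.diagonal fun i => ((Real.sqrt (d i))⁻¹ : ℂ))
    (W₀ : Matrix (Fin r) (Fin r) ℂ)
    (hW₀u : W₀ᴴ * W₀ = 1 ∧ W₀ * W₀ᴴ = 1)
    (hW₀ : VBᴴ * VA * Sig
      = W₀ * (Matrix.posSemidef_conjTranspose_mul_self (VBᴴ * VA * Sig)).sqrt)
    (W : Matrix (Fin r) (Fin r) ℂ)
    (hW : Wᴴ * W = 1 ∧ W * Wᴴ = 1) :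
    Real.sqrt ((Matrix.trace ((VB * W₀ * Sig * VAᴴ - VA * VAᴴ)ᴴ *
        (VB * W₀ * Sig * VAᴴ - VA * VAᴴ))).re)
      ≤ Real.sqrt ((Matrix.trace ((VB * W * Sig * VAᴴ - VA * VAᴴ)ᴴ *
        (VB * W * Sig * VAᴴ - VA * VAᴴ))).re) := by
  have hSigH : Sigᴴ = Sig := by
    have hstar : (star fun i => ((Real.sqrt (d i))⁻¹ : ℂ))
        = fun i => ((Real.sqrt (d i))⁻¹ : ℂ) := by
      funext i
      simp [Pi.star_apply, Complex.star_def, ← Complex.ofReal_inv, Complex.conj_ofReal]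
    rw [hSig, diagonal_conjTranspose, hstar]
  set M : Matrix (Fin r) (Fin r) ℂ := VBᴴ * VA * Sig with hM
  -- the main trace computation for a generic unitary X
  have key : ∀ (X : Matrix (Fin r) (Fin r) ℂ), Xᴴ * X = 1 →
      (Matrix.trace ((VB * X * Sig * VAᴴ - VA * VAᴴ)ᴴ *
        (VB * X * Sig * VAᴴ - VA * VAᴴ))).re
      = ((Sigᴴ * Sig).trace).re + ((1 : Matrix (Fin r) (Fin r) ℂ).trace).re
        - 2 * ((Xᴴ * M).trace).re := by
    intro X hX
    set A : Matrix (Fin n) (Fin n) ℂ := VB * X * Sig * VAᴴ with hA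
    set B : Matrix (Fin n) (Fin n) ℂ := VA * VAᴴ with hB
    have hAA : (Aᴴ * A).trace = (Sigᴴ * Sig).trace := by
      have : Aᴴ * A = VA * (Sigᴴ * (Sig * VAᴴ)) := by
        simp only [hA, conjTranspose_mul, conjTranspose_conjTranspose, Matrix.mul_assoc]
        rw [← Matrix.mul_assoc VBᴴ VB, hVB, Matrix.one_mul,
            ← Matrix.mul_assoc Xᴴ X, hX, Matrix.one_mul]
      rw [this, Matrix.trace_mul_comm, Matrix.mul_assoc, Matrix.mul_assoc, hVA,
          Matrix.mul_one]
    have hAB : (Aᴴ * B).trace = (Xᴴ * M).trace := by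
      have : Aᴴ * B = VA * (Sigᴴ * (Xᴴ * (VBᴴ * (VA * VAᴴ)))) := by
        simp only [hA, hB, conjTranspose_mul, conjTranspose_conjTranspose, Matrix.mul_assoc]
      rw [this, Matrix.trace_mul_comm]
      rw [show Sigᴴ * (Xᴴ * (VBᴴ * (VA * VAᴴ))) * VA
            = Sigᴴ * (Xᴴ * (VBᴴ * (VA * (VAᴴ * VA)))) by
          simp only [Matrix.mul_assoc]]
      rw [hVA, Matrix.mul_one, Matrix.trace_mul_comm, hM, hSigH]
      simp only [Matrix.mul_assoc]
    have hBA : ((Bᴴ * A).trace).re = ((Aᴴ * B).trace).re := by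
      have : (Aᴴ * B)ᴴ = Bᴴ * A := by
        rw [conjTranspose_mul, conjTranspose_conjTranspose]
      rw [← this, Matrix.trace_conjTranspose]
      simp
    have hBB : (Bᴴ * B).trace = ((1 : Matrix (Fin r) (Fin r) ℂ).trace) := by
      have : Bᴴ * B = VA * (VAᴴ * (VA * VAᴴ)) := by
        simp only [hB, conjTranspose_mul, conjTranspose_conjTranspose, Matrix.mul_assoc]
      rw [this, ← Matrix.mul_assoc VAᴴ VA, hVA, Matrix.one_mul, Matrix.trace_mul_comm, hVA]
    have expand : (A - B)ᴴ * (A - B) = Aᴴ * A - Aᴴ * B - (Bᴴ * A - Bᴴ * B) := by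
      rw [conjTranspose_sub]
      noncomm_ring
    rw [expand, trace_sub, trace_sub, trace_sub]
    simp only [Complex.sub_re]
    rw [hAA, hBB]
    have := hAB
    linarith [hBA, congrArg Complex.re hAB]
  rw [key W₀ hW₀u.1, key W hW.1]
  apply Real.sqrt_le_sqrt
  have hPSD := (Matrix.posSemidef_conjTranspose_mul_self (VBᴴ * VA * Sig))
  set S := hPSD.sqrt with hS
  have hSpsd : S.PosSemidef := by
    have hD : (diagonal ((↑) ∘ (√·) ∘ hPSD.1.eigenvalues) : Matrix (Fin r) (Fin r) ℂ).PosSemidef :=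
      PosSemidef.diagonal (fun i => by
        simp only [Pi.zero_apply, Function.comp_apply]
        exact_mod_cast Complex.zero_le_real.mpr (Real.sqrt_nonneg _))
    have := hD.mul_mul_conjTranspose_same (hPSD.1.eigenvectorUnitary : Matrix (Fin r) (Fin r) ℂ)
    rw [hS, Matrix.PosSemidef.sqrt]
    simpa [Matrix.star_eq_conjTranspose] using this
  have h1 : (W₀ᴴ * M).trace = S.trace := by
    rw [hW₀, ← Matrix.mul_assoc, hW₀u.1, Matrix.one_mul]
  have h2 : (Wᴴ * M).trace = ((Wᴴ * W₀) * S).trace := by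
    rw [hW₀, Matrix.mul_assoc]
  have hU : (Wᴴ * W₀)ᴴ * (Wᴴ * W₀) = 1 := by
    rw [conjTranspose_mul, conjTranspose_conjTranspose, Matrix.mul_assoc,
        ← Matrix.mul_assoc W Wᴴ, hW.2, Matrix.one_mul, hW₀u.1]
  have hle := re_trace_unitary_psd_le (Wᴴ * W₀) S hU hSpsd
  rw [h1, h2]
  linarith
end

section
/- For every n ≥ 4 there exist m ∈ ℕ and an n×n quantum permutation matrix u = (u_{ij}) with entries in M_m(ℂ) that has two noncommuting entries, i.e. there exist indices i_0, j_0, k_0, l_0 with u_{i_0 j_0} u_{k_0 l_0} ≠ u_{k_0 l_0} u_{i_0 j_0}. -/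
open Matrix

noncomputable def Pm : Matrix (Fin 2) (Fin 2) ℂ := !![1, 0; 0, 0]
noncomputable def Qm : Matrix (Fin 2) (Fin 2) ℂ := !![1/2, 1/2; 1/2, 1/2]

lemma Pm_proj : Pm * Pm = Pm := by
  ext i j; fin_cases i <;> fin_cases j <;> simp [Pm, Matrix.mul_apply, Fin.sum_univ_two]

lemma Qm_proj : Qm * Qm = Qm := by
  ext i j; fin_cases i <;> fin_cases j <;>
    simp [Qm, Matrix.mul_apply, Fin.sum_univ_two] <;> norm_num

lemma Pm_herm : Pmᴴ = Pm := by
  ext i j; fin_cases i <;> fin_cases j <;> simp [Pm, Matrix.conjTranspose_apply]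

lemma Qm_herm : Qmᴴ = Qm := by
  ext i j; fin_cases i <;> fin_cases j <;>
    simp [Qm, Matrix.conjTranspose_apply, map_inv₀, map_ofNat]

lemma PQ_ne : Pm * Qm ≠ Qm * Pm := by
  intro h
  have := congrFun (congrFun h 0) 1
  simp [Pm, Qm, Matrix.mul_apply, Fin.sum_univ_two] at this

noncomputable def U (n : ℕ) : Fin n → Fin n → Matrix (Fin 2) (Fin 2) ℂ := fun i j =>
  if i.val = 0 then (if j.val = 0 then Pm else if j.val = 1 then 1 - Pm else 0)
  else if i.val = 1 then (if j.val = 1 then Pm else if j.val = 0 then 1 - Pm else 0)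
  else if i.val = 2 then (if j.val = 2 then Qm else if j.val = 3 then 1 - Qm else 0)
  else if i.val = 3 then (if j.val = 3 then Qm else if j.val = 2 then 1 - Qm else 0)
  else if j.val = i.val then 1 else 0

lemma U_symm (n : ℕ) (i j : Fin n) : U n i j = U n j i := by
  unfold U
  split_ifs <;> first | rfl | omega

lemma U_herm (n : ℕ) (i j : Fin n) : (U n i j)ᴴ = U n i j := by
  unfold U
  split_ifs <;> simp [Pm_herm, Qm_herm]

lemma U_proj (n : ℕ) (i j : Fin n) : U n i j * U n i j = U n i j := by
  have hP : IsIdempotentElem (1 - Pm) := IsIdempotentElem.one_sub Pm_proj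
  have hQ : IsIdempotentElem (1 - Qm) := IsIdempotentElem.one_sub Qm_proj
  unfold U
  split_ifs <;> simp [Pm_proj, Qm_proj, hP.eq, hQ.eq]

lemma row_pair {n : ℕ} (a b : Fin n) (hab : a ≠ b) (A : Matrix (Fin 2) (Fin 2) ℂ)
    (f : Fin n → Matrix (Fin 2) (Fin 2) ℂ)
    (hf : ∀ k, f k = (if k = a then A else 0) + (if k = b then 1 - A else 0)) :
    ∑ k, f k = 1 := by
  rw [Finset.sum_congr rfl (fun k _ => hf k), Finset.sum_add_distrib,
    Finset.sum_ite_eq', Finset.sum_ite_eq']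
  simp

lemma U_row (n : ℕ) (hn : 4 ≤ n) (i : Fin n) : ∑ k, U n i k = 1 := by
  by_cases h0 : i.val = 0
  · refine row_pair (⟨0, by omega⟩ : Fin n) ⟨1, by omega⟩ (by simp [Fin.ext_iff]) Pm _
      (fun k => ?_)
    unfold U; rw [if_pos h0]
    split_ifs <;> simp_all [Fin.ext_iff] <;> omega
  by_cases h1 : i.val = 1
  · refine row_pair (⟨1, by omega⟩ : Fin n) ⟨0, by omega⟩ (by simp [Fin.ext_iff]) Pm _
      (fun k => ?_)
    unfold U; rw [if_neg h0, if_pos h1]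
    split_ifs <;> simp_all [Fin.ext_iff] <;> omega
  by_cases h2 : i.val = 2
  · refine row_pair (⟨2, by omega⟩ : Fin n) ⟨3, by omega⟩ (by simp [Fin.ext_iff]) Qm _
      (fun k => ?_)
    unfold U; rw [if_neg h0, if_neg h1, if_pos h2]
    split_ifs <;> simp_all [Fin.ext_iff] <;> omega
  by_cases h3 : i.val = 3
  · refine row_pair (⟨3, by omega⟩ : Fin n) ⟨2, by omega⟩ (by simp [Fin.ext_iff]) Qm _
      (fun k => ?_)
    unfold U; rw [if_neg h0, if_neg h1, if_neg h2, if_pos h3]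
    split_ifs <;> simp_all [Fin.ext_iff] <;> omega
  · have key : ∀ k : Fin n, U n i k = if k = i then 1 else 0 := by
      intro k
      unfold U; rw [if_neg h0, if_neg h1, if_neg h2, if_neg h3]
      split_ifs <;> simp_all [Fin.ext_iff]
    rw [Finset.sum_congr rfl (fun k _ => key k), Finset.sum_ite_eq']
    simp

/-- For every `n ≥ 4` there exist `m ∈ ℕ` and an `n×n` quantum permutation matrix
(magic unitary) `u` with entries in `M_m(ℂ)` — i.e. each `u i j` is an orthogonal
projection and every row and column sums to the identity — which has two noncommuting
entries. -/
theorem exists_noncommutative_magic_unitary (n : ℕ) (hn : 4 ≤ n) :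
    ∃ (m : ℕ) (u : Fin n → Fin n → Matrix (Fin m) (Fin m) ℂ),
      (∀ i j, (u i j)ᴴ = u i j) ∧
      (∀ i j, u i j * u i j = u i j) ∧
      (∀ i, ∑ k, u i k = 1) ∧
      (∀ j, ∑ k, u k j = 1) ∧
      ∃ i₀ j₀ k₀ l₀, u i₀ j₀ * u k₀ l₀ ≠ u k₀ l₀ * u i₀ j₀ := by
  refine ⟨2, U n, U_herm n, U_proj n, U_row n hn, fun j => ?_,
    ⟨0, by omega⟩, ⟨0, by omega⟩, ⟨2, by omega⟩, ⟨2, by omega⟩, ?_⟩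
  · rw [Finset.sum_congr rfl (fun k _ => U_symm n k j)]
    exact U_row n hn j
  · have h1 : U n ⟨0, by omega⟩ ⟨0, by omega⟩ = Pm := by unfold U; simp
    have h2 : U n ⟨2, by omega⟩ ⟨2, by omega⟩ = Qm := by unfold U; simp
    rw [h1, h2]
    exact PQ_ne
end
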